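/- Suppose ℒ, ℒ̄, [ℒ,ℒ̄], [ℒ,[ℒ,ℒ̄]] are pointwise linearly independent complex vector fields and there exist smooth functions a,b,c,d with [ℒ̄,[ℒ,ℒ̄]] = a ℒ + b ℒ̄ + c [ℒ,ℒ̄] + d [ℒ,[ℒ,ℒ̄]], where ℒ̄ denotes the conjugate of ℒ and conjugation satisfies conj([X,Y]) = [conj X, conj Y]. Then d·d̄ = 1 identically. -/

import Mathlib

/-- The complex-linear extension of a real-linear map `(Fin n → ℝ) →L[ℝ] (Fin n → ℂ)`
applied to a complex vector. -/
noncomputable def cdir {n : ℕ} (A : (Fin n → ℝ) →L[ℝ] (Fin n → ℂ)) (v : Fin n → ℂ) : Fin n → ℂ :=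
  A (fun k => (v k).re) + Complex.I • A (fun k => (v k).im)

/-- Lie bracket of complexified vector fields (sections of `ℂ ⊗ Tℝ^n`), extended
`ℂ`-bilinearly from the Lie bracket of real vector fields. -/
noncomputable def lieC {n : ℕ} (V W : (Fin n → ℝ) → (Fin n → ℂ)) :
    (Fin n → ℝ) → (Fin n → ℂ) :=
  fun x => cdir (fderiv ℝ W x) (V x) - cdir (fderiv ℝ V x) (W x)

/-- Pointwise conjugation of a complexified vector field. -/
def conjF {n : ℕ} (V : (Fin n → ℝ) → (Fin n → ℂ)) : (Fin n → ℝ) → (Fin n → ℂ) :=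
  fun x k => starRingEnd ℂ (V x k)

/-! ### Auxiliary lemmas -/

noncomputable def conjCLM (n : ℕ) : (Fin n → ℂ) →L[ℝ] (Fin n → ℂ) :=
  ContinuousLinearMap.pi fun i =>
    (Complex.conjCLE.toContinuousLinearMap).comp (ContinuousLinearMap.proj i)

@[simp] lemma conjCLM_apply {n : ℕ} (v : Fin n → ℂ) (k : Fin n) :
    conjCLM n v k = starRingEnd ℂ (v k) := rfl

lemma cdir_conj {n : ℕ} (A : (Fin n → ℝ) →L[ℝ] (Fin n → ℂ)) (v : Fin n → ℂ) :
    cdir ((conjCLM n).comp A) (conjCLM n v) = conjCLM n (cdir A v) := by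
  have hre : (fun k => ((starRingEnd ℂ) (v k)).re) = fun k => (v k).re := by
    funext k; exact Complex.conj_re _
  have him : (fun k => ((starRingEnd ℂ) (v k)).im) = fun k => -(v k).im := by
    funext k; exact Complex.conj_im _
  have hA : A (fun k => -(v k).im) = -(A fun k => (v k).im) := by
    rw [← map_neg]; rfl
  funext k
  simp only [cdir, ContinuousLinearMap.comp_apply, Pi.add_apply, Pi.smul_apply,
    conjCLM_apply, smul_eq_mul, hre, him, hA, map_add, map_mul, Complex.conj_I,
    Pi.neg_apply, map_neg]
  ring

lemma fderiv_conjF {n : ℕ} {V : (Fin n → ℝ) → (Fin n → ℂ)} {x : Fin n → ℝ}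
    (hV : DifferentiableAt ℝ V x) :
    fderiv ℝ (conjF V) x = (conjCLM n).comp (fderiv ℝ V x) := by
  have : conjF V = fun x => conjCLM n (V x) := rfl
  rw [this]
  exact (((conjCLM n).hasFDerivAt.comp x hV.hasFDerivAt)).fderiv

lemma conjF_lieC {n : ℕ} {V W : (Fin n → ℝ) → (Fin n → ℂ)} {x : Fin n → ℝ}
    (hV : DifferentiableAt ℝ V x) (hW : DifferentiableAt ℝ W x) :
    conjF (lieC V W) x = lieC (conjF V) (conjF W) x := by
  have h1 : conjF (lieC V W) x = conjCLM n (lieC V W x) := rfl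
  have h2 : lieC (conjF V) (conjF W) x
      = cdir ((conjCLM n).comp (fderiv ℝ W x)) (conjCLM n (V x))
        - cdir ((conjCLM n).comp (fderiv ℝ V x)) (conjCLM n (W x)) := by
    unfold lieC
    rw [fderiv_conjF hV, fderiv_conjF hW]
    rfl
  rw [h1, h2, cdir_conj, cdir_conj, ← map_sub]
  rfl

lemma cdir_neg_right {n : ℕ} (A : (Fin n → ℝ) →L[ℝ] (Fin n → ℂ)) (v : Fin n → ℂ) :
    cdir A (-v) = -(cdir A v) := by
  have h1 : (fun k => ((-v) k).re) = -(fun k => (v k).re) := by funext k; simp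
  have h2 : (fun k => ((-v) k).im) = -(fun k => (v k).im) := by funext k; simp
  simp only [cdir, h1, h2, map_neg, smul_neg]; abel

lemma lieC_neg_right {n : ℕ} (V W : (Fin n → ℝ) → (Fin n → ℂ)) (x : Fin n → ℝ) :
    lieC V (fun y => -(W y)) x = -(lieC V W x) := by
  have h : fderiv ℝ (fun y => -(W y)) x = -(fderiv ℝ W x) := fderiv_neg
  have h2 : cdir (-(fderiv ℝ W x)) (V x) = -(cdir (fderiv ℝ W x) (V x)) := by
    simp [cdir]; abel
  have h3 : (fun y => -(W y)) x = -(W x) := rfl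
  simp only [lieC, h, h2, h3, cdir_neg_right]
  abel

lemma lieC_swap {n : ℕ} (V W : (Fin n → ℝ) → (Fin n → ℂ)) (x : Fin n → ℝ) :
    lieC W V x = -(lieC V W x) := by
  simp [lieC]

noncomputable def reCLMn (n : ℕ) : (Fin n → ℂ) →L[ℝ] (Fin n → ℝ) :=
  ContinuousLinearMap.pi fun i => Complex.reCLM.comp (ContinuousLinearMap.proj i)

noncomputable def imCLMn (n : ℕ) : (Fin n → ℂ) →L[ℝ] (Fin n → ℝ) :=
  ContinuousLinearMap.pi fun i => Complex.imCLM.comp (ContinuousLinearMap.proj i)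

lemma contDiff_lieC {n : ℕ} {V W : (Fin n → ℝ) → (Fin n → ℂ)}
    (hV : ContDiff ℝ (⊤ : ℕ∞) V) (hW : ContDiff ℝ (⊤ : ℕ∞) W) :
    ContDiff ℝ (⊤ : ℕ∞) (lieC V W) := by
  have key : ∀ (P Q : (Fin n → ℝ) → (Fin n → ℂ)), ContDiff ℝ (⊤ : ℕ∞) P → ContDiff ℝ (⊤ : ℕ∞) Q →
      ContDiff ℝ (⊤ : ℕ∞) (fun x => cdir (fderiv ℝ Q x) (P x)) := by
    intro P Q hP hQ
    have hfd : ContDiff ℝ (⊤ : ℕ∞) (fun x => fderiv ℝ Q x) := hQ.fderiv_right (by simp)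
    have h1 : ContDiff ℝ (⊤ : ℕ∞) (fun x => (fderiv ℝ Q x) (reCLMn n (P x))) :=
      hfd.clm_apply ((reCLMn n).contDiff.comp hP)
    have h2 : ContDiff ℝ (⊤ : ℕ∞) (fun x => (fderiv ℝ Q x) (imCLMn n (P x))) :=
      hfd.clm_apply ((imCLMn n).contDiff.comp hP)
    have : (fun x => cdir (fderiv ℝ Q x) (P x))
        = fun x => (fderiv ℝ Q x) (reCLMn n (P x)) + Complex.I • (fderiv ℝ Q x) (imCLMn n (P x)) := rfl
    rw [this]
    exact h1.add (h2.const_smul _)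
  exact (key V W hV hW).sub (key W V hW hV)

lemma conjCLM_smul {n : ℕ} (c : ℂ) (v : Fin n → ℂ) :
    conjCLM n (c • v) = (starRingEnd ℂ c) • conjCLM n v := by
  funext k; simp

/-- Suppose `ℒ, ℒ̄, [ℒ,ℒ̄], [ℒ,[ℒ,ℒ̄]]` are pointwise linearly independent complex
vector fields and there are smooth `a, b, c, d` with
`[ℒ̄,[ℒ,ℒ̄]] = a ℒ + b ℒ̄ + c [ℒ,ℒ̄] + d [ℒ,[ℒ,ℒ̄]]`.  Then `d·d̄ = 1` identically. -/
theorem stmt_13 (n : ℕ) (L : (Fin n → ℝ) → (Fin n → ℂ)) (hL : ContDiff ℝ (⊤ : ℕ∞) L)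
    (hfree : ∀ x, LinearIndependent ℂ
      ![L x, conjF L x, lieC L (conjF L) x, lieC L (lieC L (conjF L)) x])
    (a b c d : (Fin n → ℝ) → ℂ)
    (ha : ContDiff ℝ (⊤ : ℕ∞) a) (hb : ContDiff ℝ (⊤ : ℕ∞) b)
    (hc : ContDiff ℝ (⊤ : ℕ∞) c) (hd : ContDiff ℝ (⊤ : ℕ∞) d)
    (hyp : ∀ x, lieC (conjF L) (lieC L (conjF L)) x =
      a x • L x + b x • conjF L x + c x • lieC L (conjF L) x +
        d x • lieC L (lieC L (conjF L)) x) :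
    ∀ x, d x * starRingEnd ℂ (d x) = 1 := by
  intro x
  have hLB : ContDiff ℝ (⊤ : ℕ∞) (conjF L) := by
    have : conjF L = fun y => conjCLM n (L y) := rfl
    rw [this]; exact (conjCLM n).contDiff.comp hL
  have hM : ContDiff ℝ (⊤ : ℕ∞) (lieC L (conjF L)) := contDiff_lieC hL hLB
  have hLd : Differentiable ℝ L := hL.differentiable (by simp)
  have hLBd : Differentiable ℝ (conjF L) := hLB.differentiable (by simp)
  have hMd : Differentiable ℝ (lieC L (conjF L)) := hM.differentiable (by simp)
  have hconjL : conjF (conjF L) = L := by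
    funext y k; exact Complex.conj_conj _
  have hMconj : conjF (lieC L (conjF L)) = fun y => -(lieC L (conjF L) y) := by
    funext y
    rw [conjF_lieC (hLd y) (hLBd y), hconjL]
    exact lieC_swap _ _ _
  have E1 : conjCLM n (lieC (conjF L) (lieC L (conjF L)) x)
      = -(lieC L (lieC L (conjF L)) x) := by
    rw [show conjCLM n (lieC (conjF L) (lieC L (conjF L)) x)
        = conjF (lieC (conjF L) (lieC L (conjF L))) x from rfl,
      conjF_lieC (hLBd x) (hMd x), hconjL, hMconj, lieC_neg_right]
  have E2 : conjCLM n (lieC L (lieC L (conjF L)) x)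
      = -(lieC (conjF L) (lieC L (conjF L)) x) := by
    rw [show conjCLM n (lieC L (lieC L (conjF L)) x)
        = conjF (lieC L (lieC L (conjF L))) x from rfl,
      conjF_lieC (hLd x) (hMd x), hMconj, lieC_neg_right]
  have hCL : conjCLM n (L x) = conjF L x := rfl
  have hCLB : conjCLM n (conjF L x) = L x := by
    funext k; exact Complex.conj_conj _
  have hCM : conjCLM n (lieC L (conjF L) x) = -(lieC L (conjF L) x) :=
    congrFun hMconj x
  have key := congrArg (conjCLM n) (hyp x)
  rw [map_add, map_add, map_add, conjCLM_smul, conjCLM_smul, conjCLM_smul, conjCLM_smul,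
    E1, E2, hCL, hCLB, hCM, hyp x] at key
  set ca := starRingEnd ℂ (a x)
  set cb := starRingEnd ℂ (b x)
  set cc := starRingEnd ℂ (c x)
  set cd := starRingEnd ℂ (d x)
  have key2 : (cb - cd * a x) • L x + (ca - cd * b x) • conjF L x
      + (-cc - cd * c x) • lieC L (conjF L) x
      + (1 - cd * d x) • lieC L (lieC L (conjF L)) x = 0 := by
    have expand : (cb - cd * a x) • L x + (ca - cd * b x) • conjF L x
        + (-cc - cd * c x) • lieC L (conjF L) x
        + (1 - cd * d x) • lieC L (lieC L (conjF L)) x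
        = (ca • conjF L x + cb • L x + cc • -(lieC L (conjF L) x)
            + cd • -(a x • L x + b x • conjF L x + c x • lieC L (conjF L) x
              + d x • lieC L (lieC L (conjF L)) x))
          - (-(lieC L (lieC L (conjF L)) x)) := by
      module
    rw [expand, ← key, sub_self]
  have hli := hfree x
  rw [Fintype.linearIndependent_iff] at hli
  have h3 := hli ![cb - cd * a x, ca - cd * b x, -cc - cd * c x, 1 - cd * d x]
    (by
      rw [Fin.sum_univ_four]
      simpa using key2) 3
  simp only [Matrix.cons_val_three, Matrix.tail_cons, Matrix.head_cons] at h3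
  linear_combination -h3
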